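/- arXiv:2509.05465 — 2 statements merged into one kernel-verified Lean document; each statement's English description precedes it below -/
import Mathlib

section
/- For every n ≥ 1, the number φ(n) of ordered cycle decompositions of permutations of [n] satisfies the recursion φ(n) = Σ_{k=1}^{n} ((n−1)!/(n−k)!) · Σ_{ℓ=0}^{n−k} C(n−k, ℓ) · φ(ℓ) · φ(n−k−ℓ), where (n−1)!/(n−k)! is the falling factorial (n−1)(n−2)⋯(n−k+1) (empty product 1 when k = 1) and C(n−k, ℓ) is a binomial coefficient. -/
/-- The number of orbits of a permutation `σ` of `[n]` acting on `[n]`: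
the number of (nontrivial) cycles of `σ` plus the number of its fixed points. -/
def permOrbits {n : ℕ} (σ : Equiv.Perm (Fin n)) : ℕ :=
  σ.cycleType.card + (Finset.univ.filter fun x => σ x = x).card

/-- `ocd n = φ(n)`: the number of ordered cycle decompositions of permutations
of `[n]`, i.e. `Σ_{σ ∈ S_n} c(σ)!` where `c(σ)` is the number of orbits of `σ`. -/
def ocd (n : ℕ) : ℕ := ∑ σ : Equiv.Perm (Fin n), Nat.factorial (permOrbits σ)

namespace OCDAux

open Equiv Equiv.Perm Finset

variable {α β : Type*}

/-- The orbit setoid of a permutation. -/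
def oSetoid (σ : Perm α) : Setoid α :=
  ⟨σ.SameCycle, ⟨fun _ => ⟨0, by simp⟩, fun h => h.symm, fun h1 h2 => h1.trans h2⟩⟩

instance oDecEq [Fintype α] [DecidableEq α] (σ : Perm α) :
    DecidableEq (Quotient (oSetoid σ)) :=
  @Quotient.decidableEq α (oSetoid σ) (fun a b => inferInstanceAs (Decidable (σ.SameCycle a b)))

instance oFintype [Fintype α] [DecidableEq α] (σ : Perm α) :
    Fintype (Quotient (oSetoid σ)) :=
  @Quotient.fintype α _ (oSetoid σ) (fun a b => inferInstanceAs (Decidable (σ.SameCycle a b)))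

/-- Number of orbits of a permutation. -/
def oc [Fintype α] [DecidableEq α] (σ : Perm α) : ℕ :=
  Fintype.card (Quotient (oSetoid σ))

lemma sameCycle_map [Finite α] {f : Perm α} {g : Perm β} (φ : α → β)
    (hstep : ∀ x, g.SameCycle (φ x) (φ (f x))) {a b : α} (h : f.SameCycle a b) :
    g.SameCycle (φ a) (φ b) := by
  have key : ∀ (i : ℕ) (a : α), g.SameCycle (φ a) (φ ((f ^ i) a)) := by
    intro i
    induction i with
    | zero => intro a; simpa using (SameCycle.refl g (φ a))
    | succ n ih =>
      intro a
      rw [pow_succ, Perm.mul_apply]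
      exact (hstep a).trans (ih (f a))
  obtain ⟨i, -, rfl⟩ := h.exists_pow_eq'
  exact key i a

/-- Workhorse: if `π : α → Q` separates exactly the cycles of `σ` and is surjective,
then the number of orbits of `σ` is `card Q`. -/
lemma oc_eq_card [Fintype α] [DecidableEq α] {Q : Type*} [Fintype Q] (σ : Perm α) (π : α → Q)
    (h1 : ∀ b, π (σ b) = π b)
    (h2 : ∀ a b, π a = π b → σ.SameCycle a b)
    (h3 : Function.Surjective π) :
    oc σ = Fintype.card Q := by
  have key : ∀ (i : ℕ) (a : α), π ((σ ^ i) a) = π a := by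
    intro i
    induction i with
    | zero => simp
    | succ n ih =>
      intro a
      rw [pow_succ, Perm.mul_apply, ih (σ a), h1]
  have key' : ∀ a b : α, σ.SameCycle a b → π a = π b := by
    intro a b h
    obtain ⟨i, -, rfl⟩ := h.exists_pow_eq'
    exact (key i a).symm
  refine Fintype.card_of_bijective (f := Quotient.lift π key') ⟨?_, ?_⟩
  · intro q1 q2
    induction q1 using Quotient.ind
    induction q2 using Quotient.ind
    intro h
    exact Quotient.sound (h2 _ _ h)
  · intro q
    obtain ⟨a, rfl⟩ := h3 q
    exact ⟨Quotient.mk _ a, rfl⟩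

section EqOrbits
variable [Fintype α] [DecidableEq α]

lemma oc_eq_orbits (σ : Perm α) :
    oc σ = σ.cycleType.card + (Finset.univ.filter fun x => σ x = x).card := by
  classical
  have h := oc_eq_card (Q := ↥σ.cycleFactorsFinset ⊕ ↥(Finset.univ.filter fun x => σ x = x)) σ
    (fun x => if h : σ x = x then Sum.inr ⟨x, by simp [h]⟩
      else Sum.inl ⟨σ.cycleOf x, cycleOf_mem_cycleFactorsFinset_iff.2 (mem_support.2 h)⟩)
    ?_ ?_ ?_
  · rw [h, Fintype.card_sum, Fintype.card_coe, Fintype.card_coe, cycleType_def,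
      Multiset.card_map]
    rfl
  · intro x
    by_cases h : σ x = x
    · simp only [h]
    · have h' : σ (σ x) ≠ σ x := fun e => h (σ.injective e)
      simp only [dif_neg h, dif_neg h', cycleOf_self_apply]
  · intro a b hab
    by_cases ha : σ a = a <;> by_cases hb : σ b = b
    · rw [dif_pos ha, dif_pos hb] at hab
      have : a = b := congrArg Subtype.val (Sum.inr.inj hab)
      exact this ▸ SameCycle.refl σ a
    · rw [dif_pos ha, dif_neg hb] at hab
      exact absurd hab (by simp)
    · rw [dif_neg ha, dif_pos hb] at hab
      exact absurd hab (by simp)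
    · rw [dif_neg ha, dif_neg hb] at hab
      have hco : σ.cycleOf a = σ.cycleOf b := congrArg Subtype.val (Sum.inl.inj hab)
      have hbmem : b ∈ (σ.cycleOf a).support := by
        rw [hco]
        exact (mem_support_cycleOf_iff).2 ⟨SameCycle.refl σ b, mem_support.2 hb⟩
      exact ((mem_support_cycleOf_iff).1 hbmem).1
  · rintro (⟨c, hc⟩ | ⟨x, hx⟩)
    · obtain ⟨x, hx1, -⟩ := (mem_cycleFactorsFinset_iff.1 hc).1
      have hxs : x ∈ c.support := mem_support.2 hx1
      have hcx : c = σ.cycleOf x := cycle_is_cycleOf hxs hc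
      have hσx : σ x ≠ x := by
        rw [← (mem_cycleFactorsFinset_iff.1 hc).2 x hxs]
        exact hx1
      exact ⟨x, by simp only [dif_neg hσx]; exact congrArg Sum.inl (Subtype.ext hcx.symm)⟩
    · have hfix : σ x = x := by simpa using hx
      exact ⟨x, by simp only [dif_pos hfix]⟩

/-- invariance under relabeling -/
lemma oc_permCongr {β : Type*} [Fintype β] [DecidableEq β] (e : α ≃ β) (σ : Perm α) :
    oc (e.permCongr σ) = oc σ := by
  have h := oc_eq_card (Q := Quotient (oSetoid σ)) (e.permCongr σ)
    (fun b => Quotient.mk (oSetoid σ) (e.symm b)) ?_ ?_ ?_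
  · exact h
  · intro b
    apply Quotient.sound
    show σ.SameCycle _ _
    simp only [permCongr_apply, Equiv.symm_apply_apply]
    exact ⟨-1, by simp⟩
  · intro a b hab
    have hs : σ.SameCycle (e.symm a) (e.symm b) := Quotient.exact hab
    have := sameCycle_map (g := e.permCongr σ) (f := σ) e
      (fun x => ⟨1, by simp [permCongr_apply]⟩) hs
    simpa using this
  · intro q
    induction q using Quotient.ind with
    | _ x => exact ⟨e x, by simp⟩
end EqOrbits

section Split
variable {p : α → Prop} [DecidablePred p]

lemma subtypeCongr_pow_left (σ1 : Perm {x // p x}) (σ2 : Perm {x // ¬p x}) (i : ℕ)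
    (x : {x // p x}) : ((σ1.subtypeCongr σ2) ^ i) x.val = ((σ1 ^ i) x).val := by
  induction i generalizing x with
  | zero => simp
  | succ n ih =>
    rw [pow_succ, pow_succ, Perm.mul_apply, Perm.mul_apply,
      Perm.subtypeCongr.left_apply_subtype, ih (σ1 x)]

lemma subtypeCongr_pow_right (σ1 : Perm {x // p x}) (σ2 : Perm {x // ¬p x}) (i : ℕ)
    (x : {x // ¬p x}) : ((σ1.subtypeCongr σ2) ^ i) x.val = ((σ2 ^ i) x).val := by
  induction i generalizing x with
  | zero => simp
  | succ n ih =>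
    rw [pow_succ, pow_succ, Perm.mul_apply, Perm.mul_apply,
      Perm.subtypeCongr.right_apply_subtype, ih (σ2 x)]

lemma subtypeCongr_mem [Finite α] {σ1 : Perm {x // p x}} {σ2 : Perm {x // ¬p x}} {u v : α}
    (h : (σ1.subtypeCongr σ2).SameCycle u v) : p u ↔ p v := by
  have step : ∀ w : α, p (σ1.subtypeCongr σ2 w) ↔ p w := by
    intro w
    by_cases hw : p w
    · rw [Perm.subtypeCongr.left_apply σ1 σ2 hw]
      exact iff_of_true (σ1 ⟨w, hw⟩).2 hw
    · rw [Perm.subtypeCongr.right_apply σ1 σ2 hw]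
      exact iff_of_false (σ2 ⟨w, hw⟩).2 hw
  have key : ∀ (i : ℕ) (w : α), p (((σ1.subtypeCongr σ2) ^ i) w) ↔ p w := by
    intro i
    induction i with
    | zero => simp
    | succ n ih =>
      intro w
      rw [pow_succ, Perm.mul_apply]
      exact (ih _).trans (step w)
  obtain ⟨i, -, rfl⟩ := h.exists_pow_eq'
  exact (key i u).symm
end Split

section SplitF
variable [Fintype α] [DecidableEq α] {p : α → Prop} [DecidablePred p]

def spSet (σ1 : Perm {x // p x}) (σ2 : Perm {x // ¬p x}) :
    Finset (Quotient (oSetoid (σ1.subtypeCongr σ2))) :=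
  Finset.univ.image fun x : {x // p x} => Quotient.mk (oSetoid (σ1.subtypeCongr σ2)) x.val

def snSet (σ1 : Perm {x // p x}) (σ2 : Perm {x // ¬p x}) :
    Finset (Quotient (oSetoid (σ1.subtypeCongr σ2))) :=
  Finset.univ.image fun x : {x // ¬p x} => Quotient.mk (oSetoid (σ1.subtypeCongr σ2)) x.val

lemma mem_spSet_iff (σ1 : Perm {x // p x}) (σ2 : Perm {x // ¬p x}) (a : α) :
    Quotient.mk (oSetoid (σ1.subtypeCongr σ2)) a ∈ spSet σ1 σ2 ↔ p a := by
  constructor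
  · intro h
    obtain ⟨x, -, hx⟩ := mem_image.1 h
    exact (subtypeCongr_mem (Quotient.exact hx)).1 x.2
  · intro h
    exact mem_image.2 ⟨⟨a, h⟩, mem_univ _, rfl⟩

lemma mem_snSet_iff (σ1 : Perm {x // p x}) (σ2 : Perm {x // ¬p x}) (a : α) :
    Quotient.mk (oSetoid (σ1.subtypeCongr σ2)) a ∈ snSet σ1 σ2 ↔ ¬p a := by
  constructor
  · intro h
    obtain ⟨x, -, hx⟩ := mem_image.1 h
    exact fun ha => x.2 ((subtypeCongr_mem (Quotient.exact hx)).2 ha)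
  · intro h
    exact mem_image.2 ⟨⟨a, h⟩, mem_univ _, rfl⟩

lemma snSet_eq_compl (σ1 : Perm {x // p x}) (σ2 : Perm {x // ¬p x}) :
    snSet σ1 σ2 = (spSet σ1 σ2)ᶜ := by
  ext q
  induction q using Quotient.ind with
  | _ a => rw [mem_compl, mem_snSet_iff, mem_spSet_iff]

lemma card_spSet (σ1 : Perm {x // p x}) (σ2 : Perm {x // ¬p x}) :
    (spSet σ1 σ2).card = oc σ1 := by
  rw [← Fintype.card_coe]
  symm
  apply oc_eq_card σ1
    (fun x => (⟨Quotient.mk (oSetoid (σ1.subtypeCongr σ2)) x.val,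
      (mem_spSet_iff σ1 σ2 x.val).2 x.2⟩ : ↥(spSet σ1 σ2)))
  · intro x
    apply Subtype.ext
    apply Quotient.sound
    refine ⟨-1, ?_⟩
    simp only [zpow_neg, zpow_one]
    rw [← Perm.subtypeCongr.left_apply_subtype σ1 σ2 x, Perm.inv_def, Equiv.symm_apply_apply]
  · intro a b hab
    have h : (σ1.subtypeCongr σ2).SameCycle a.val b.val :=
      Quotient.exact (congrArg Subtype.val hab)
    obtain ⟨i, -, hi⟩ := h.exists_pow_eq'
    rw [subtypeCongr_pow_left σ1 σ2 i a] at hi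
    exact ⟨(i : ℤ), by rw [zpow_natCast]; exact Subtype.ext hi⟩
  · rintro ⟨q, hq⟩
    obtain ⟨x, -, hx⟩ := mem_image.1 hq
    exact ⟨x, Subtype.ext hx⟩

lemma card_snSet (σ1 : Perm {x // p x}) (σ2 : Perm {x // ¬p x}) :
    (snSet σ1 σ2).card = oc σ2 := by
  rw [← Fintype.card_coe]
  symm
  apply oc_eq_card σ2
    (fun x => (⟨Quotient.mk (oSetoid (σ1.subtypeCongr σ2)) x.val,
      (mem_snSet_iff σ1 σ2 x.val).2 x.2⟩ : ↥(snSet σ1 σ2)))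
  · intro x
    apply Subtype.ext
    apply Quotient.sound
    refine ⟨-1, ?_⟩
    simp only [zpow_neg, zpow_one]
    rw [← Perm.subtypeCongr.right_apply_subtype σ1 σ2 x, Perm.inv_def, Equiv.symm_apply_apply]
  · intro a b hab
    have h : (σ1.subtypeCongr σ2).SameCycle a.val b.val :=
      Quotient.exact (congrArg Subtype.val hab)
    obtain ⟨i, -, hi⟩ := h.exists_pow_eq'
    rw [subtypeCongr_pow_right σ1 σ2 i a] at hi
    exact ⟨(i : ℤ), by rw [zpow_natCast]; exact Subtype.ext hi⟩
  · rintro ⟨q, hq⟩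
    obtain ⟨x, -, hx⟩ := mem_image.1 hq
    exact ⟨x, Subtype.ext hx⟩

lemma oc_subtypeCongr_sub (σ1 : Perm {x // p x}) (σ2 : Perm {x // ¬p x}) :
    oc (σ1.subtypeCongr σ2) - (spSet σ1 σ2).card = oc σ2 := by
  rw [← card_snSet σ1 σ2, snSet_eq_compl, card_compl]
  rfl
end SplitF

lemma sum_card_fact {γ : Type*} [Fintype γ] [DecidableEq γ] :
    ∑ S : Finset γ, Nat.factorial S.card * Nat.factorial (Fintype.card γ - S.card) = Nat.factorial (Fintype.card γ + 1) := by
  have h := Finset.sum_powerset_apply_card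
    (f := fun j => Nat.factorial j * Nat.factorial (Fintype.card γ - j)) (x := (univ : Finset γ))
  rw [powerset_univ, card_univ] at h
  rw [h]
  have : ∀ m ∈ range (Fintype.card γ + 1),
      (Fintype.card γ).choose m • (Nat.factorial m * Nat.factorial (Fintype.card γ - m)) = Nat.factorial (Fintype.card γ) := by
    intro m hm
    rw [smul_eq_mul, ← mul_assoc, Nat.choose_mul_factorial_mul_factorial
      (Nat.lt_succ_iff.1 (mem_range.1 hm))]
  rw [Finset.sum_congr rfl this, sum_const, card_range, smul_eq_mul, Nat.factorial_succ]

lemma oc_irrel {β : Type*} (i1 i2 : Fintype β) [DecidableEq β] (σ : Perm β) :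
    @oc β i1 _ σ = @oc β i2 _ σ :=
  congrArg (fun i => @oc β i _ σ) (Subsingleton.elim i1 i2)

lemma sigma_snd_eq {σ τ : Perm α} [Fintype α] [DecidableEq α] (h : σ = τ)
    (S : Finset (Quotient (oSetoid σ))) (T : Finset (Quotient (oSetoid τ)))
    (hST : ∀ a : α, Quotient.mk (oSetoid σ) a ∈ S ↔ Quotient.mk (oSetoid τ) a ∈ T) :
    (⟨σ, S⟩ : Σ σ : Perm α, Finset (Quotient (oSetoid σ))) = ⟨τ, T⟩ := by
  subst h
  have : S = T := by
    ext q
    induction q using Quotient.ind with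
    | _ a => exact hST a
  rw [this]

lemma sum_oc_succ_factorial [Fintype α] [DecidableEq α] :
    ∑ σ : Perm α, Nat.factorial (oc σ + 1) =
      ∑ A : Finset α, (∑ σ1 : Perm {x // x ∈ A}, Nat.factorial (oc σ1)) *
        ∑ σ2 : Perm {x // x ∉ A}, Nat.factorial (oc σ2) := by
  classical
  calc ∑ σ : Perm α, Nat.factorial (oc σ + 1)
      = ∑ σ : Perm α, ∑ S : Finset (Quotient (oSetoid σ)), Nat.factorial S.card * Nat.factorial (oc σ - S.card) := by
        refine Finset.sum_congr rfl fun σ _ => ?_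
        simp only [oc]
        exact (sum_card_fact (γ := Quotient (oSetoid σ))).symm
    _ = ∑ x : Σ σ : Perm α, Finset (Quotient (oSetoid σ)), Nat.factorial x.2.card * Nat.factorial (oc x.1 - x.2.card) := by
        rw [← Finset.univ_sigma_univ, Finset.sum_sigma]
    _ = ∑ y : Σ A : Finset α, Perm {x // x ∈ A} × Perm {x // x ∉ A},
          Nat.factorial (oc y.2.1) * Nat.factorial (oc y.2.2) := by
        symm
        apply Finset.sum_bij
          (i := fun (y : Σ A : Finset α, Perm {x // x ∈ A} × Perm {x // x ∉ A}) _ =>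
            (⟨y.2.1.subtypeCongr y.2.2, spSet y.2.1 y.2.2⟩ :
              Σ σ : Perm α, Finset (Quotient (oSetoid σ))))
        · exact fun _ _ => mem_univ _
        · rintro ⟨A, τ1, τ2⟩ - ⟨B, ρ1, ρ2⟩ - heq
          have hm := congrArg (fun x : (Σ σ : Perm α, Finset (Quotient (oSetoid σ))) =>
            Finset.univ.filter fun a => Quotient.mk (oSetoid x.1) a ∈ x.2) heq
          dsimp only at hm
          have eA : (Finset.univ.filter fun a =>
              Quotient.mk (oSetoid (τ1.subtypeCongr τ2)) a ∈ spSet τ1 τ2) = A := by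
            ext a
            simp [mem_spSet_iff]
          have eB : (Finset.univ.filter fun a =>
              Quotient.mk (oSetoid (ρ1.subtypeCongr ρ2)) a ∈ spSet ρ1 ρ2) = B := by
            ext a
            simp [mem_spSet_iff]
          rw [eA, eB] at hm
          subst hm
          have hσ : τ1.subtypeCongr τ2 = ρ1.subtypeCongr ρ2 := congrArg Sigma.fst heq
          have h1 : τ1 = ρ1 := by
            ext x
            have h := congrArg (fun (f : Perm α) => f x.val) hσ
            rw [Perm.subtypeCongr.left_apply_subtype τ1 τ2 x,
              Perm.subtypeCongr.left_apply_subtype ρ1 ρ2 x] at h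
            exact h
          have h2 : τ2 = ρ2 := by
            ext x
            have h := congrArg (fun (f : Perm α) => f x.val) hσ
            rw [Perm.subtypeCongr.right_apply_subtype τ1 τ2 x,
              Perm.subtypeCongr.right_apply_subtype ρ1 ρ2 x] at h
            exact h
          rw [h1, h2]
        · rintro ⟨σ, S⟩ -
          have hmem : ∀ x : α, Quotient.mk (oSetoid σ) (σ x) = Quotient.mk (oSetoid σ) x := by
            intro x
            apply Quotient.sound
            refine ⟨-1, ?_⟩
            rw [zpow_neg, zpow_one]
            exact σ.symm_apply_apply x
          have h1 : ∀ x : α,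
              (x ∈ Finset.univ.filter fun a => Quotient.mk (oSetoid σ) a ∈ S) ↔
              (σ x ∈ Finset.univ.filter fun a => Quotient.mk (oSetoid σ) a ∈ S) := by
            intro x
            simp only [mem_filter, mem_univ, true_and, hmem x]
          refine ⟨⟨Finset.univ.filter fun a => Quotient.mk (oSetoid σ) a ∈ S,
            σ.subtypePerm (fun x => (h1 x).symm), σ.subtypePerm fun x => not_congr (h1 x).symm⟩, mem_univ _, ?_⟩
          apply sigma_snd_eq
          case h =>
            ext a
            by_cases ha : a ∈ Finset.univ.filter fun b => Quotient.mk (oSetoid σ) b ∈ S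
            · rw [Perm.subtypeCongr.left_apply _ _ ha, subtypePerm_apply]
            · rw [Perm.subtypeCongr.right_apply _ _ ha, subtypePerm_apply]
          case hST =>
            intro a
            rw [mem_spSet_iff]
            simp only [mem_filter, mem_univ, true_and]
        · rintro ⟨A, τ1, τ2⟩ -
          dsimp only
          rw [oc_subtypeCongr_sub, card_spSet]
          exact congrArg₂ (fun a b : ℕ => a.factorial * b.factorial)
            (oc_irrel _ _ τ1) (oc_irrel _ _ τ2)
    _ = ∑ A : Finset α, (∑ σ1 : Perm {x // x ∈ A}, Nat.factorial (oc σ1)) *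
          ∑ σ2 : Perm {x // x ∉ A}, Nat.factorial (oc σ2) := by
        rw [← Finset.univ_sigma_univ, Finset.sum_sigma]
        refine Finset.sum_congr rfl fun A _ => ?_
        rw [Finset.sum_mul_sum]
        exact Fintype.sum_prod_type
          (f := fun s : Perm {x // x ∈ A} × Perm {x // x ∉ A} =>
            Nat.factorial (oc s.1) * Nat.factorial (oc s.2))

lemma oc_decomposeFin {n : ℕ} (p : Fin (n + 1)) (τ : Perm (Fin n)) :
    oc (Equiv.Perm.decomposeFin.symm (p, τ)) = oc τ + if p = 0 then 1 else 0 := by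
  set σ := Equiv.Perm.decomposeFin.symm (p, τ) with hσ
  have hzero : σ 0 = p := Equiv.Perm.decomposeFin_symm_apply_zero p τ
  have hsucc : ∀ x : Fin n, σ x.succ = Equiv.swap 0 p (τ x).succ :=
    fun x => Equiv.Perm.decomposeFin_symm_apply_succ τ p x
  by_cases hp : p = 0
  · subst hp
    rw [if_pos rfl]
    have hs : ∀ x : Fin n, σ x.succ = (τ x).succ := by
      intro x
      rw [hsucc x, Equiv.swap_self, Equiv.refl_apply]
    have h := oc_eq_card (Q := Quotient (oSetoid τ) ⊕ Unit) σ
      (fun a => Fin.cases (Sum.inr Unit.unit)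
        (fun x => Sum.inl (Quotient.mk (oSetoid τ) x)) a) ?_ ?_ ?_
    · rw [h, Fintype.card_sum, Fintype.card_unit]
      rfl
    · intro b
      induction b using Fin.cases with
      | zero => rw [hzero]
      | succ x =>
        rw [hs x]
        simp only [Fin.cases_succ]
        exact congrArg Sum.inl (Quotient.sound ⟨-1, by simp⟩)
    · intro a b
      induction a using Fin.cases with
      | zero =>
        induction b using Fin.cases with
        | zero => exact fun _ => ⟨0, by simp⟩
        | succ y => intro h; simp at h
      | succ x =>
        induction b using Fin.cases with
        | zero => intro h; simp at h
        | succ y =>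
          intro h
          simp only [Fin.cases_succ, Sum.inl.injEq] at h
          exact sameCycle_map Fin.succ (fun z => ⟨1, by rw [zpow_one]; exact (hs z).symm⟩)
            (Quotient.exact h)
    · rintro (q | ⟨⟩)
      · induction q using Quotient.ind with
        | _ x => exact ⟨x.succ, by simp⟩
      · exact ⟨0, rfl⟩
  · rw [if_neg hp]
    obtain ⟨q, rfl⟩ : ∃ q : Fin n, q.succ = p := ⟨p.pred hp, Fin.succ_pred p hp⟩
    have hstep : ∀ x : Fin n, σ.SameCycle x.succ (τ x).succ := by
      intro x
      by_cases h : (τ x).succ = q.succ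
      · refine ⟨2, ?_⟩
        have e1 : σ x.succ = 0 := by rw [hsucc x, h, Equiv.swap_apply_right]
        have e2 : σ 0 = (τ x).succ := by rw [hzero, h]
        show (σ ^ (2 : ℤ)) x.succ = (τ x).succ
        rw [show (2:ℤ) = 1 + 1 by norm_num, zpow_add, zpow_one, Perm.mul_apply, e1, e2]
      · refine ⟨1, ?_⟩
        rw [zpow_one, hsucc x, Equiv.swap_apply_of_ne_of_ne (Fin.succ_ne_zero (τ x)) h]
    have hmap : ∀ x y : Fin n, τ.SameCycle x y → σ.SameCycle x.succ y.succ :=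
      fun x y h => sameCycle_map Fin.succ hstep h
    have h0 : σ.SameCycle 0 q.succ := ⟨1, by rw [zpow_one, hzero]⟩
    have h := oc_eq_card (Q := Quotient (oSetoid τ)) σ
      (fun a => Fin.cases (Quotient.mk (oSetoid τ) q)
        (fun x => Quotient.mk (oSetoid τ) x) a) ?_ ?_ ?_
    · rw [h]
      rfl
    · intro b
      induction b using Fin.cases with
      | zero =>
        rw [hzero]
        simp only [Fin.cases_succ, Fin.cases_zero]
      | succ x =>
        by_cases h : (τ x).succ = q.succ
        · have e1 : σ x.succ = 0 := by rw [hsucc x, h, Equiv.swap_apply_right]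
          rw [e1]
          simp only [Fin.cases_zero, Fin.cases_succ]
          have hq : τ x = q := Fin.succ_injective n h
          rw [← hq]
          exact Quotient.sound ⟨-1, by simp⟩
        · have e1 : σ x.succ = (τ x).succ := by
            rw [hsucc x, Equiv.swap_apply_of_ne_of_ne (Fin.succ_ne_zero (τ x)) h]
          rw [e1]
          simp only [Fin.cases_succ]
          exact Quotient.sound ⟨-1, by simp⟩
    · intro a b
      induction a using Fin.cases with
      | zero =>
        induction b using Fin.cases with
        | zero => exact fun _ => ⟨0, by simp⟩
        | succ y =>
          intro h
          simp only [Fin.cases_zero, Fin.cases_succ] at h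
          exact h0.trans (hmap _ _ (Quotient.exact h))
      | succ x =>
        induction b using Fin.cases with
        | zero =>
          intro h
          simp only [Fin.cases_zero, Fin.cases_succ] at h
          exact ((h0.trans (hmap _ _ (Quotient.exact h.symm))).symm)
        | succ y =>
          intro h
          simp only [Fin.cases_succ] at h
          exact hmap _ _ (Quotient.exact h)
    · intro q'
      induction q' using Quotient.ind with
      | _ x => exact ⟨x.succ, by simp⟩

lemma sum_oc (α : Type*) [Fintype α] [DecidableEq α] :
    ∑ σ : Perm α, Nat.factorial (oc σ) = ocd (Fintype.card α) := by
  rw [ocd]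
  apply Fintype.sum_equiv (Equiv.permCongr (Fintype.equivFin α))
  intro σ
  rw [permOrbits, ← oc_eq_orbits, oc_permCongr]

lemma sum_finset_card {γ : Type*} [Fintype γ] [DecidableEq γ] (g : ℕ → ℕ) :
    ∑ S : Finset γ, g S.card =
      ∑ j ∈ range (Fintype.card γ + 1), (Fintype.card γ).choose j * g j := by
  have h := Finset.sum_powerset_apply_card (f := g) (x := (univ : Finset γ))
  rw [powerset_univ, card_univ] at h
  rw [h]
  exact Finset.sum_congr rfl fun j _ => nsmul_eq_mul _ _

lemma ocd_zero : ocd 0 = 1 := by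
  rw [ocd]
  rw [Fintype.sum_subsingleton _ (1 : Perm (Fin 0))]
  have : permOrbits (1 : Perm (Fin 0)) = 0 := by
    rw [permOrbits, cycleType_one]
    simp
  rw [this]
  rfl

lemma ocd_succ (m : ℕ) :
    ocd (m + 1) = (∑ j ∈ range (m + 1), m.choose j * ocd j * ocd (m - j)) + m * ocd m := by
  have key : ocd (m + 1) = ∑ σ : Perm (Fin (m+1)), Nat.factorial (oc σ) := by
    rw [ocd]
    refine Finset.sum_congr rfl fun σ _ => ?_
    rw [permOrbits, ← oc_eq_orbits]
  rw [key, ← Equiv.sum_comp (Equiv.Perm.decomposeFin (n := m)).symm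
    (fun σ => Nat.factorial (oc σ)), Fintype.sum_prod_type]
  have h2 : ∀ p : Fin (m+1), ∑ τ : Perm (Fin m), Nat.factorial (oc (Equiv.Perm.decomposeFin.symm (p, τ)))
      = if p = 0 then ∑ τ : Perm (Fin m), Nat.factorial (oc τ + 1)
        else ∑ τ : Perm (Fin m), Nat.factorial (oc τ) := by
    intro p
    by_cases hp : p = 0
    · rw [if_pos hp]
      refine Finset.sum_congr rfl fun τ _ => ?_
      rw [oc_decomposeFin, if_pos hp]
    · rw [if_neg hp]
      refine Finset.sum_congr rfl fun τ _ => ?_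
      rw [oc_decomposeFin, if_neg hp, Nat.add_zero]
  rw [Finset.sum_congr rfl fun p _ => h2 p, Fin.sum_univ_succ, if_pos rfl]
  have h3 : ∀ i : Fin m, (if (i.succ : Fin (m+1)) = 0
      then ∑ τ : Perm (Fin m), Nat.factorial (oc τ + 1)
      else ∑ τ : Perm (Fin m), Nat.factorial (oc τ)) = ∑ τ : Perm (Fin m), Nat.factorial (oc τ) :=
    fun i => if_neg (Fin.succ_ne_zero i)
  rw [Finset.sum_congr rfl fun i _ => h3 i, Finset.sum_const, card_univ, Fintype.card_fin,
    smul_eq_mul, sum_oc, Fintype.card_fin]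
  congr 1
  rw [sum_oc_succ_factorial]
  have h4 : ∀ A : Finset (Fin m),
      (∑ σ1 : Perm {x // x ∈ A}, Nat.factorial (oc σ1)) *
        ∑ σ2 : Perm {x // x ∉ A}, Nat.factorial (oc σ2) = ocd A.card * ocd (m - A.card) := by
    intro A
    rw [sum_oc, sum_oc, Fintype.card_coe,
      Fintype.card_subtype_compl, Fintype.card_fin, Fintype.card_coe]
  rw [Finset.sum_congr rfl fun A _ => h4 A,
    sum_finset_card (fun j => ocd j * ocd (m - j)), Fintype.card_fin]
  exact Finset.sum_congr rfl fun j _ => (mul_assoc _ _ _).symm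

noncomputable def G (m : ℕ) : ℕ :=
  ∑ ℓ ∈ Finset.range (m + 1), m.choose ℓ * ocd ℓ * ocd (m - ℓ)

lemma G_def (m : ℕ) :
    G m = ∑ ℓ ∈ Finset.range (m + 1), m.choose ℓ * ocd ℓ * ocd (m - ℓ) := rfl

end OCDAux

/-- Proposition: for `n ≥ 1`, the number `φ(n)` of ordered cycle decompositions
of permutations of `[n]` satisfies
`φ(n) = Σ_{k=1}^{n} (n−1)⋯(n−k+1) · Σ_{ℓ=0}^{n−k} C(n−k,ℓ) · φ(ℓ) · φ(n−k−ℓ)`. -/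
theorem ocd_recursion (n : ℕ) (hn : 1 ≤ n) :
    ocd n = ∑ k ∈ Finset.Icc 1 n, (n - 1).descFactorial (k - 1) *
      ∑ ℓ ∈ Finset.range (n - k + 1), (n - k).choose ℓ * ocd ℓ * ocd (n - k - ℓ) := by
  have key : ∀ n : ℕ, 1 ≤ n →
      ocd n = ∑ k ∈ Finset.Icc 1 n, (n - 1).descFactorial (k - 1) * OCDAux.G (n - k) := by
    intro n hn
    induction n, hn using Nat.le_induction with
    | base =>
      rw [Finset.Icc_self, Finset.sum_singleton]
      rw [show ocd 1 = ocd (0 + 1) from rfl, OCDAux.ocd_succ 0,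
        show ((1:ℕ) - 1) = 0 from rfl, Nat.descFactorial_zero, one_mul, OCDAux.G_def]
      simp
    | succ n hn1 ih =>
      have hreindex : ∀ (F : ℕ → ℕ) (N : ℕ),
          ∑ k ∈ Finset.Icc 1 N, F k = ∑ i ∈ Finset.range N, F (1 + i) := by
        intro F N
        rw [← Finset.Ico_add_one_right_eq_Icc, Finset.sum_Ico_eq_sum_range]
        simp
      rw [hreindex (fun k => (n + 1 - 1).descFactorial (k - 1) * OCDAux.G (n + 1 - k)) (n + 1)]
      have hterm : ∀ i : ℕ, (n + 1 - 1).descFactorial (1 + i - 1) * OCDAux.G (n + 1 - (1 + i))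
          = n.descFactorial i * OCDAux.G (n - i) := by
        intro i
        have e0 : n + 1 - 1 = n := by omega
        have e1 : 1 + i - 1 = i := by omega
        have e2 : n + 1 - (1 + i) = n - i := by omega
        rw [e0, e1, e2]
      rw [Finset.sum_congr rfl fun i _ => hterm i, Finset.sum_range_succ',
        Nat.descFactorial_zero, one_mul, Nat.sub_zero]
      have hterm2 : ∀ i : ℕ, n.descFactorial (i + 1) * OCDAux.G (n - (i + 1))
          = n * ((n - 1).descFactorial i * OCDAux.G (n - 1 - i)) := by
        intro i
        have h1 : n.descFactorial (i + 1) = n * (n - 1).descFactorial i := by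
          conv_lhs => rw [show n = (n - 1) + 1 by omega]
          rw [Nat.succ_descFactorial_succ, show (n - 1) + 1 = n by omega]
        have h2 : n - (i + 1) = n - 1 - i := by omega
        rw [h1, h2, mul_assoc]
      rw [Finset.sum_congr rfl fun i _ => hterm2 i, ← Finset.mul_sum]
      have hih : ocd n = ∑ i ∈ Finset.range n, (n - 1).descFactorial i * OCDAux.G (n - 1 - i) := by
        rw [ih, hreindex (fun k => (n - 1).descFactorial (k - 1) * OCDAux.G (n - k)) n]
        refine Finset.sum_congr rfl fun i _ => ?_
        have e1 : 1 + i - 1 = i := by omega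
        have e2 : n - (1 + i) = n - 1 - i := by omega
        rw [e1, e2]
      rw [← hih, OCDAux.ocd_succ n, OCDAux.G_def]
      exact Nat.add_comm _ _
  rw [key n hn]
  exact Finset.sum_congr rfl fun k _ => rfl
end

section
/- Special insertion preserves secondary dinv (Claim 3.2): Let A ⊂ ℤ be a nonempty finite set, let f be a parking function on A with secdinv(f) = 0, let x ∈ ℤ with x ∉ A, and let c, d be positive integers with c, d ≤ |A| such that (1) d = maxdiag(f) and every label y ∈ A with col_f(y) > c satisfies diag_f(y) < d, and (2) there is a label z ∈ A with col_f(z) = c and diag_f(z) = d which is the topmost label of column c (no label w has col_f(w) = c and row_f(w) > row_f(z)). Then the (c,d)-insertion h of x into f is a parking function on A ∪ {x} with secdinv(h) = secdinv(f) = 0 and diag_h(x) = d. -/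
/-!
Parking functions on a finite set of integer labels `A ⊆ ℤ`.
A parking function on `A` (with `|A| = m`) is encoded as a function `f : ℤ → ℕ`
which is `0` off `A`, takes values in `{1,…,m}` on `A`, and satisfies the
parking condition: for every `1 ≤ k ≤ m`, `|{a ∈ A : f a ≤ k}| ≥ k`.
-/

/-- The row of label `a`: the number of labels in strictly smaller columns, plus
the number of labels in the same column that are `≤ a`. -/
def pfRow (A : Finset ℤ) (f : ℤ → ℕ) (a : ℤ) : ℕ :=
  (A.filter fun b => f b < f a).card + (A.filter fun b => f b = f a ∧ b ≤ a).card

/-- The diagonal of label `a`: its row minus its column (the column of `a` is `f a`). -/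
def pfDiag (A : Finset ℤ) (f : ℤ → ℕ) (a : ℤ) : ℤ :=
  (pfRow A f a : ℤ) - (f a : ℤ)

/-- `f : ℤ → ℕ` encodes a parking function on the finite label set `A ⊆ ℤ`. -/
def IsParkingOn (A : Finset ℤ) (f : ℤ → ℕ) : Prop :=
  (∀ a ∈ A, 1 ≤ f a ∧ f a ≤ A.card) ∧
  (∀ a, a ∉ A → f a = 0) ∧
  ∀ k : ℕ, 1 ≤ k → k ≤ A.card → k ≤ (A.filter fun a => f a ≤ k).card

/-- The number of secondary dinv pairs `(a, b)`: pairs with `a < b`,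
`diag a = diag b - 1` and `col a > col b`. -/
def secdinv (A : Finset ℤ) (f : ℤ → ℕ) : ℕ :=
  ((A ×ˢ A).filter fun p =>
    p.1 < p.2 ∧ pfDiag A f p.1 = pfDiag A f p.2 - 1 ∧ f p.2 < f p.1).card

/-- The set of parking functions on `A` with zero secondary dinv. -/
def PFZ (A : Finset ℤ) : Set (ℤ → ℕ) :=
  {f | IsParkingOn A f ∧ secdinv A f = 0}

/-- `pfz n`: the number of parking functions of length `n` (on `{1,…,n}`)
with zero secondary dinv. -/
noncomputable def pfz (n : ℕ) : ℕ := Nat.card (PFZ (Finset.Icc 1 (n : ℤ)))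

/-- Insertion `Γ(f, x, k)` of a new label `x` into `f` at column `k`:
`x` gets column `k`; labels in columns `< k` (or in column `k` and smaller
than `x`) keep their column; the others shift one column to the right. -/
def insertPF (f : ℤ → ℕ) (x : ℤ) (k : ℕ) : ℤ → ℕ := fun a =>
  if a = x then k
  else if f a < k ∨ (f a = k ∧ a < x) then f a
  else f a + 1

/-- The `(c,d)`-insertion of `x ∉ A` into a parking function `f` on `A`:
among the labels `y ∈ A` on diagonal `d - 1` with column `> c` and `y < x`
(these are `y_1, …, y_{ℓ*}` in the paper's notation), take the one with the
largest column; insert `x` at that column (i.e. `Γ(f, x, col(y_{ℓ*}))`), or at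
column `c + 1` if there is no such label (`ℓ* = 0`). -/
def specialInsert (A : Finset ℤ) (f : ℤ → ℕ) (x : ℤ) (c : ℕ) (d : ℤ) : ℤ → ℕ :=
  let T := A.filter fun y => pfDiag A f y = d - 1 ∧ c < f y ∧ y < x
  insertPF f x (if T.Nonempty then T.sup f else c + 1)

/-!
Inserting `x` at column `k` keeps the reading order (by column, then by label) of the old
labels and moves exactly those read after `x` one column right, so every old label keeps its
diagonal and no two old labels swap columns; only pairs involving `x` can be new secondary dinv
pairs. The topmost label of column `c`, on diagonal `d`, gives `#{col ≤ c} = c + d`, which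
leaves column `c + 1` empty and makes every label on diagonal `d - 1` right of column `c` the
topmost of its column. Hence the labels read before `x` are exactly those in columns `≤ c*`,
`c* + d - 1` of them, and `x` lands on diagonal `d`. Nothing lies on diagonal `d + 1`, and the
labels smaller than `x` on diagonal `d - 1` sit in columns `≤ c*`, so `x` forms no secondary dinv
pair.
-/

open Finset

section Insertion

variable {A : Finset ℤ} {f : ℤ → ℕ} {x : ℤ} {k : ℕ}

@[simp] lemma insertPF_self : insertPF f x k x = k := by simp [insertPF]

lemma insertPF_of_ne {a : ℤ} (h : a ≠ x) :
    insertPF f x k a = if f a < k ∨ (f a = k ∧ a < x) then f a else f a + 1 := by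
  simp [insertPF, h]

lemma pfRow_eq_card_filter (A : Finset ℤ) (g : ℤ → ℕ) (a : ℤ) :
    pfRow A g a = #(A.filter fun b => g b < g a ∨ (g b = g a ∧ b ≤ a)) := by
  rw [pfRow, filter_or, card_union_of_disjoint (disjoint_filter.2 fun b _ h1 h2 => by omega)]

lemma pfRow_lt_pfRow_of_lt {a b : ℤ} (hb : b ∈ A) (hcol : f a = f b) (hab : a < b) :
    pfRow A f a < pfRow A f b := by
  rw [pfRow_eq_card_filter, pfRow_eq_card_filter]
  refine card_lt_card ((ssubset_iff_of_subset (monotone_filter_right A fun w h => ?_)).2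
    ⟨b, mem_filter.2 ⟨hb, Or.inr ⟨rfl, le_rfl⟩⟩, fun h => ?_⟩)
  · omega
  · have := (mem_filter.1 h).2
    omega

lemma pfRow_eq_card_filter_le {z : ℤ} (hmax : ∀ w ∈ A, f w = f z → w ≤ z) :
    pfRow A f z = #(A.filter (f · ≤ f z)) := by
  rw [pfRow_eq_card_filter]
  congr 1
  refine filter_congr fun b hb => ⟨by omega, fun h => ?_⟩
  rcases h.lt_or_eq with h | h
  · exact Or.inl h
  · exact Or.inr ⟨h, hmax b hb h⟩

lemma card_filter_le_lt_pfRow {b : ℤ} {c : ℕ} (hb : b ∈ A) (hc : c < f b) :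
    #(A.filter (f · ≤ c)) < pfRow A f b := by
  rw [pfRow_eq_card_filter, Nat.lt_iff_add_one_le, ← card_insert_of_notMem
    fun h => (mem_filter.1 h).2.not_gt hc]
  refine card_le_card (insert_subset (mem_filter.2 ⟨hb, Or.inr ⟨rfl, le_rfl⟩⟩) ?_)
  intro w hw
  simp only [mem_filter] at hw ⊢
  exact ⟨hw.1, Or.inl (by omega)⟩

lemma insertPF_precedes_iff {a b : ℤ} (ha : a ≠ x) (hb : b ≠ x) :
    (insertPF f x k b < insertPF f x k a ∨ (insertPF f x k b = insertPF f x k a ∧ b ≤ a)) ↔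
      (f b < f a ∨ (f b = f a ∧ b ≤ a)) := by
  rw [insertPF_of_ne ha, insertPF_of_ne hb]
  split_ifs <;> omega

lemma lt_of_insertPF_lt {a b : ℤ} (ha : a ≠ x) (hb : b ≠ x) (hab : a < b)
    (h : insertPF f x k b < insertPF f x k a) : f b < f a := by
  rw [insertPF_of_ne ha, insertPF_of_ne hb] at h
  split_ifs at h <;> omega

/-- An old label moves one column right exactly when `x` is read before it, which also
raises its row by one; so its diagonal is unchanged. -/
lemma pfDiag_insertPF_of_mem (hx : x ∉ A) {a : ℤ} (ha : a ∈ A) :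
    pfDiag (insert x A) (insertPF f x k) a = pfDiag A f a := by
  have hax : a ≠ x := ne_of_mem_of_not_mem ha hx
  have hold : (A.filter fun b => insertPF f x k b < insertPF f x k a ∨
      (insertPF f x k b = insertPF f x k a ∧ b ≤ a)) =
      A.filter fun b => f b < f a ∨ (f b = f a ∧ b ≤ a) :=
    filter_congr fun b hb => insertPF_precedes_iff hax (ne_of_mem_of_not_mem hb hx)
  rw [pfDiag, pfDiag, pfRow_eq_card_filter, filter_insert, pfRow_eq_card_filter A f]
  split_ifs with hxa
  · rw [insertPF_self, insertPF_of_ne hax] at hxa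
    rw [card_insert_of_notMem fun h => hx (mem_filter.1 h).1, hold, insertPF_of_ne hax]
    split_ifs at hxa ⊢ <;> push_cast <;> omega
  · rw [insertPF_self, insertPF_of_ne hax] at hxa
    rw [hold, insertPF_of_ne hax]
    split_ifs at hxa ⊢ <;> omega

lemma pfDiag_insertPF_self (hx : x ∉ A) (hcol : ∀ b ∈ A, f b = k → b < x) :
    pfDiag (insert x A) (insertPF f x k) x = #(A.filter (f · ≤ k)) + 1 - k := by
  have hbefore : (A.filter fun b => insertPF f x k b < k ∨ (insertPF f x k b = k ∧ b ≤ x)) =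
      A.filter (f · ≤ k) := by
    refine filter_congr fun b hb => ?_
    have := hcol b hb
    rw [insertPF_of_ne (ne_of_mem_of_not_mem hb hx)]
    split_ifs <;> omega
  rw [pfDiag, pfRow_eq_card_filter, filter_insert, insertPF_self, if_pos (Or.inr ⟨rfl, le_rfl⟩),
    card_insert_of_notMem fun h => hx (mem_filter.1 h).1, hbefore]
  push_cast
  ring

lemma le_card_filter_of_isParkingOn (hpf : IsParkingOn A f) {j : ℕ} (hj : j ≤ #A) :
    j ≤ #(A.filter (f · ≤ j)) := by
  rcases Nat.eq_zero_or_pos j with rfl | hj0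
  · exact Nat.zero_le _
  · exact hpf.2.2 j hj0 hj

lemma isParkingOn_insertPF (hx : x ∉ A) (hpf : IsParkingOn A f) (hk1 : 1 ≤ k)
    (hk : k ≤ #A + 1) : IsParkingOn (insert x A) (insertPF f x k) := by
  have hcard : #(insert x A) = #A + 1 := card_insert_of_notMem hx
  refine ⟨fun a ha => ?_, fun a ha => ?_, fun j hj1 hj => ?_⟩
  · rw [hcard]
    rcases mem_insert.1 ha with rfl | ha
    · rw [insertPF_self]
      omega
    · have := hpf.1 a ha
      rw [insertPF_of_ne (ne_of_mem_of_not_mem ha hx)]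
      split_ifs <;> omega
  · rw [insertPF_of_ne (ne_of_mem_of_not_mem (mem_insert_self x A) ha).symm,
      hpf.2.1 a fun h => ha (mem_insert_of_mem h)]
    split_ifs <;> omega
  · rw [hcard] at hj
    by_cases hjk : j < k
    · -- columns `< k` are untouched
      refine (le_card_filter_of_isParkingOn hpf (by omega)).trans (card_le_card ?_)
      intro a ha
      obtain ⟨haA, haj⟩ := mem_filter.1 ha
      refine mem_filter.2 ⟨mem_insert_of_mem haA, ?_⟩
      rw [insertPF_of_ne (ne_of_mem_of_not_mem haA hx)]
      split_ifs <;> omega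
    · -- `x` together with the old labels in columns `< j`
      have hold : j ≤ #(insert x (A.filter (f · ≤ j - 1))) := by
        rw [card_insert_of_notMem fun h => hx (mem_filter.1 h).1]
        have := le_card_filter_of_isParkingOn hpf (j := j - 1) (by omega)
        omega
      refine hold.trans (card_le_card (insert_subset ?_ fun a ha => ?_))
      · exact mem_filter.2 ⟨mem_insert_self x A, by rw [insertPF_self]; omega⟩
      · obtain ⟨haA, haj⟩ := mem_filter.1 ha
        refine mem_filter.2 ⟨mem_insert_of_mem haA, ?_⟩
        rw [insertPF_of_ne (ne_of_mem_of_not_mem haA hx)]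
        split_ifs <;> omega

lemma secdinv_eq_zero_iff :
    secdinv A f = 0 ↔ ∀ a ∈ A, ∀ b ∈ A, a < b → pfDiag A f a = pfDiag A f b - 1 → f a ≤ f b := by
  simp only [secdinv, card_eq_zero, filter_eq_empty_iff, mem_product, not_and, not_lt,
    Prod.forall, and_imp]
  exact ⟨fun h a ha b hb => h a b ha hb, fun h a b ha hb => h a ha b hb⟩

lemma secdinv_insertPF_eq_zero (hx : x ∉ A) (hsd : secdinv A f = 0)
    (hmax : ∀ a ∈ A, pfDiag A f a ≤ pfDiag (insert x A) (insertPF f x k) x)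
    (hleft : ∀ a ∈ A, a < x →
      pfDiag A f a = pfDiag (insert x A) (insertPF f x k) x - 1 → f a ≤ k) :
    secdinv (insert x A) (insertPF f x k) = 0 := by
  rw [secdinv_eq_zero_iff] at hsd ⊢
  intro a ha b hb hab hd
  simp only [mem_insert] at ha hb
  rcases ha with rfl | ha <;> rcases hb with rfl | hb
  · exact absurd hab (lt_irrefl _)
  · rw [pfDiag_insertPF_of_mem hx hb] at hd
    linarith [hmax b hb]
  · rw [pfDiag_insertPF_of_mem hx ha] at hd
    have := hleft a ha hab hd
    rw [insertPF_self, insertPF_of_ne (ne_of_mem_of_not_mem ha hx)]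
    split_ifs <;> omega
  · rw [pfDiag_insertPF_of_mem hx ha, pfDiag_insertPF_of_mem hx hb] at hd
    by_contra h
    exact absurd (hsd a ha b hb hab hd) (lt_of_insertPF_lt (ne_of_mem_of_not_mem ha hx)
      (ne_of_mem_of_not_mem hb hx) hab (not_le.1 h)).not_ge

end Insertion

section SpecialInsertion

variable {A : Finset ℤ} {f : ℤ → ℕ} {x : ℤ} {c : ℕ} {d : ℤ}

/-- The column `c*` of the `(c,d)`-insertion. -/
def specialInsertCol (A : Finset ℤ) (f : ℤ → ℕ) (x : ℤ) (c : ℕ) (d : ℤ) : ℕ :=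
  let T := A.filter fun y => pfDiag A f y = d - 1 ∧ c < f y ∧ y < x
  if T.Nonempty then T.sup f else c + 1

lemma specialInsert_eq_insertPF :
    specialInsert A f x c d = insertPF f x (specialInsertCol A f x c d) := rfl

lemma specialInsertCol_cases :
    specialInsertCol A f x c d = c + 1 ∨
      ∃ y ∈ A, pfDiag A f y = d - 1 ∧ c < f y ∧ y < x ∧ specialInsertCol A f x c d = f y := by
  simp only [specialInsertCol]
  split_ifs with hT
  · obtain ⟨y, hyT, hy⟩ := exists_mem_eq_sup _ hT f
    obtain ⟨hyA, hyd, hyc, hyx⟩ := mem_filter.1 hyT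
    exact Or.inr ⟨y, hyA, hyd, hyc, hyx, hy⟩
  · exact Or.inl rfl

lemma lt_specialInsertCol : c < specialInsertCol A f x c d := by
  rcases @specialInsertCol_cases A f x c d with hK | ⟨y, -, -, hyc, -, hK⟩ <;> omega

lemma specialInsertCol_le_card (hpf : IsParkingOn A f) (hc : c ≤ #A) :
    specialInsertCol A f x c d ≤ #A + 1 := by
  rcases @specialInsertCol_cases A f x c d with hK | ⟨y, hy, -, -, -, hK⟩
  · omega
  · have := (hpf.1 y hy).2
    omega

lemma le_specialInsertCol {a : ℤ} (ha : a ∈ A) (hax : a < x) (hd : pfDiag A f a = d - 1) :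
    f a ≤ specialInsertCol A f x c d := by
  by_cases hc : c < f a
  · have haT : a ∈ A.filter fun y => pfDiag A f y = d - 1 ∧ c < f y ∧ y < x :=
      mem_filter.2 ⟨ha, hd, hc, hax⟩
    simp only [specialInsertCol]
    rw [if_pos ⟨a, haT⟩]
    exact le_sup haT
  · exact (not_lt.1 hc).trans lt_specialInsertCol.le

section

variable (hright : ∀ y ∈ A, c < f y → pfDiag A f y < d)
include hright

/-- A label above `y` would lie on a diagonal `≥ d`. -/
lemma le_of_pfDiag_eq_sub_one {y : ℤ} (hyc : c < f y) (hyd : pfDiag A f y = d - 1) {b : ℤ}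
    (hb : b ∈ A) (hcol : f b = f y) : b ≤ y :=
  le_of_not_gt fun hyb => by
    have := pfRow_lt_pfRow_of_lt hb hcol.symm hyb
    have := hright b hb (hcol ▸ hyc)
    rw [pfDiag] at *
    omega

variable (hcard : (#(A.filter (f · ≤ c)) : ℤ) = c + d)
include hcard

lemma apply_ne_add_one {b : ℤ} (hb : b ∈ A) : f b ≠ c + 1 := fun hbc => by
  have := card_filter_le_lt_pfRow (f := f) (c := c) hb (by omega)
  have := hright b hb (by omega)
  rw [pfDiag, hbc] at this
  omega

lemma lt_of_apply_eq_specialInsertCol {b : ℤ} (hb : b ∈ A)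
    (hbK : f b = specialInsertCol A f x c d) : b < x := by
  rcases specialInsertCol_cases with hK | ⟨y, -, hyd, hyc, hyx, hK⟩
  · exact absurd (hbK.trans hK) (apply_ne_add_one hright hcard hb)
  · exact (le_of_pfDiag_eq_sub_one hright hyc hyd hb (hbK.trans hK)).trans_lt hyx

lemma card_filter_le_specialInsertCol :
    (#(A.filter (f · ≤ specialInsertCol A f x c d)) : ℤ) + 1 = specialInsertCol A f x c d + d := by
  rcases specialInsertCol_cases with hK | ⟨y, -, hyd, hyc, -, hK⟩
  · have hempty : A.filter (f · ≤ c + 1) = A.filter (f · ≤ c) :=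
      filter_congr fun b hb => by have := apply_ne_add_one hright hcard hb; omega
    rw [hK, hempty, hcard]
    push_cast
    ring
  · rw [hK, ← pfRow_eq_card_filter_le fun w hw => le_of_pfDiag_eq_sub_one hright hyc hyd hw]
    rw [pfDiag] at hyd
    omega

end

end SpecialInsertion

theorem specialInsert_secdinv_general (A : Finset ℤ) (f : ℤ → ℕ)
    (hpf : IsParkingOn A f) (hsd : secdinv A f = 0)
    (x : ℤ) (hx : x ∉ A) (c d : ℕ)
    (hcA : c ≤ A.card)
    (hdmax : (∀ a ∈ A, pfDiag A f a ≤ (d : ℤ)) ∧ ∃ a ∈ A, pfDiag A f a = (d : ℤ))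
    (hright : ∀ y ∈ A, c < f y → pfDiag A f y < (d : ℤ))
    (hcol : ∃ z ∈ A, f z = c ∧ pfDiag A f z = (d : ℤ) ∧
      ∀ w ∈ A, f w = c → pfRow A f w ≤ pfRow A f z) :
    IsParkingOn (insert x A) (specialInsert A f x c (d : ℤ)) ∧
      secdinv (insert x A) (specialInsert A f x c (d : ℤ)) = secdinv A f ∧
      secdinv (insert x A) (specialInsert A f x c (d : ℤ)) = 0 ∧
      pfDiag (insert x A) (specialInsert A f x c (d : ℤ)) x = (d : ℤ) := by
  obtain ⟨z, hz, hzc, hzd, htop⟩ := hcol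
  have hcard : (#(A.filter (f · ≤ c)) : ℤ) = c + d := by
    have hzmax : ∀ w ∈ A, f w = f z → w ≤ z := fun w hw hwz => le_of_not_gt fun hzw =>
      (pfRow_lt_pfRow_of_lt hw hwz.symm hzw).not_ge (htop w hw (hwz.trans hzc))
    rw [← hzc, ← pfRow_eq_card_filter_le hzmax]
    rw [pfDiag, hzc] at hzd
    omega
  set K := specialInsertCol A f x c d
  have hdiag : pfDiag (insert x A) (insertPF f x K) x = d := by
    rw [pfDiag_insertPF_self hx fun b hb => lt_of_apply_eq_specialInsertCol hright hcard hb]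
    linarith [card_filter_le_specialInsertCol (x := x) hright hcard]
  have hzero : secdinv (insert x A) (insertPF f x K) = 0 :=
    secdinv_insertPF_eq_zero hx hsd (hdiag ▸ hdmax.1)
      fun a ha hax had => le_specialInsertCol ha hax (hdiag ▸ had)
  have hK1 : 1 ≤ K := Nat.one_le_iff_ne_zero.2 (Nat.ne_zero_of_lt lt_specialInsertCol)
  rw [specialInsert_eq_insertPF]
  exact ⟨isParkingOn_insertPF hx hpf hK1 (specialInsertCol_le_card hpf hcA),
    hzero.trans hsd.symm, hzero, hdiag⟩

/-- Claim 3.2: special insertion preserves (zero) secondary dinv.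
If `f` is a parking function on a nonempty `A` with `secdinv f = 0`, `x ∉ A`,
and `c, d` are positive integers `≤ |A|` such that
(1) `d = maxdiag f` and every label in a column `> c` has diagonal `< d`, and
(2) some label `z` lies in column `c` on diagonal `d` and is topmost in its column,
then the `(c,d)`-insertion `h` of `x` into `f` is a parking function on
`A ∪ {x}` with `secdinv h = secdinv f = 0` and `diag_h x = d`. -/
theorem specialInsert_secdinv (A : Finset ℤ) (hA : A.Nonempty) (f : ℤ → ℕ)
    (hpf : IsParkingOn A f) (hsd : secdinv A f = 0)
    (x : ℤ) (hx : x ∉ A) (c d : ℕ)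
    (hc1 : 1 ≤ c) (hd1 : 1 ≤ d) (hcA : c ≤ A.card) (hdA : d ≤ A.card)
    (hdmax : (∀ a ∈ A, pfDiag A f a ≤ (d : ℤ)) ∧ ∃ a ∈ A, pfDiag A f a = (d : ℤ))
    (hright : ∀ y ∈ A, c < f y → pfDiag A f y < (d : ℤ))
    (hcol : ∃ z ∈ A, f z = c ∧ pfDiag A f z = (d : ℤ) ∧
      ∀ w ∈ A, f w = c → pfRow A f w ≤ pfRow A f z) :
    IsParkingOn (insert x A) (specialInsert A f x c (d : ℤ)) ∧
      secdinv (insert x A) (specialInsert A f x c (d : ℤ)) = secdinv A f ∧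
      secdinv (insert x A) (specialInsert A f x c (d : ℤ)) = 0 ∧
      pfDiag (insert x A) (specialInsert A f x c (d : ℤ)) x = (d : ℤ) :=
  specialInsert_secdinv_general A f hpf hsd x hx c d hcA hdmax hright hcol
end
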